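/- arXiv:2409.16119 — 4 statements merged into one kernel-verified Lean document; each statement's English description precedes it below -/
import Mathlib

section
/- Let G = (V,E) be a connected loopless multigraph with |V| > 2. Then there exists an edge e ∈ E such that the maximum bond size is preserved under contraction of e, i.e. |B(G/e)| = |B(G)|. In particular, for any maximum bond B of G there is an edge e ∉ B such that B is still a bond of G/e. -/
open scoped Classical

/-- A loopless multigraph on vertex type `V` with edge type `E`:
each edge has two distinct endpoints, parallel edges are allowed. -/
structure Multigraph (V : Type*) (E : Type*) where
  ends : E → Sym2 V
  loopless : ∀ e, ¬ (ends e).IsDiag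

namespace Multigraph

variable {V E : Type*} (G : Multigraph V E)

/-- `u` and `v` are joined by a walk using only edges in `F`. -/
def Reach (F : Set E) (u v : V) : Prop :=
  Relation.ReflTransGen (fun x y => ∃ e ∈ F, G.ends e = s(x, y)) u v

/-- The subgraph with edge set `F` (and all vertices) is connected. -/
def ConnectedOn (F : Set E) : Prop := ∀ u v : V, G.Reach F u v

/-- The multigraph is connected. -/
def Connected : Prop := G.ConnectedOn Set.univ

/-- A cut set of a connected multigraph: removing its edges disconnects the graph. -/
def CutSet (C : Set E) : Prop := ¬ G.ConnectedOn Cᶜ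

/-- A bond: an inclusion-wise minimal cut set. -/
def IsBond (C : Set E) : Prop := G.CutSet C ∧ ∀ C' ⊂ C, ¬ G.CutSet C'

/-- The maximum size of a bond, `|B(G)|`. -/
noncomputable def maxBondSize : ℕ := sSup {n | ∃ C : Set E, G.IsBond C ∧ C.ncard = n}

/-- A set of edges is acyclic (contains no cycle) iff no edge of it joins
two vertices that are already connected by the remaining edges. -/
def Acyclic (F : Set E) : Prop :=
  ∀ e ∈ F, ∀ u v : V, G.ends e = s(u, v) → ¬ G.Reach (F \ {e}) u v

/-- A spanning tree: a set of `|V| - 1` edges containing no cycle. -/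
def IsSpanningTree (T : Set E) : Prop :=
  T.ncard = Nat.card V - 1 ∧ G.Acyclic T

/-- The total weight of an edge set. -/
noncomputable def weight (w : E → ℝ) (T : Set E) : ℝ := ∑ᶠ e ∈ T, w e

/-- A minimum spanning tree with respect to edge weights `w`. -/
def IsMST (w : E → ℝ) (T : Set E) : Prop :=
  G.IsSpanningTree T ∧ ∀ T', G.IsSpanningTree T' → weight w T ≤ weight w T'

/-- `f` lies on the (unique) `u`-`v` path in the tree `T`: it belongs to `T` and
removing it from `T` disconnects `u` from `v`. -/
def OnPath (T : Set E) (u v : V) (f : E) : Prop :=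
  f ∈ T ∧ ¬ G.Reach (T \ {f}) u v

/-- The vertex identification produced by contracting the edge `e`. -/
def contractSetoid (e : E) : Setoid V where
  r x y := x = y ∨ G.ends e = s(x, y)
  iseqv := by
    refine ⟨fun x => Or.inl rfl, ?_, ?_⟩
    · rintro x y (rfl | h)
      · exact Or.inl rfl
      · right; rwa [Sym2.eq_swap]
    · rintro x y z (rfl | hxy) (rfl | hyz)
      · exact Or.inl rfl
      · exact Or.inr hyz
      · exact Or.inr hxy
      · rw [hxy] at hyz
        rw [Sym2.eq_iff] at hyz
        rcases hyz with ⟨rfl, rfl⟩ | ⟨rfl, -⟩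
        · exact Or.inl rfl
        · exact Or.inl rfl

/-- The contraction `G/e`: the endpoints of `e` are merged into a single vertex,
`e` is removed, and all resulting loops (the edges parallel to `e`) are deleted. -/
def contract (e : E) :
    Multigraph (Quotient (G.contractSetoid e)) {f : E // f ≠ e ∧ G.ends f ≠ G.ends e} where
  ends f := (G.ends f.1).map (Quotient.mk (G.contractSetoid e))
  loopless := by
    rintro ⟨f, hfe, hff⟩ h
    obtain ⟨x, y, hf⟩ : ∃ x y, G.ends f = s(x, y) := by
      induction G.ends f using Sym2.inductionOn with
      | hf x y => exact ⟨x, y, rfl⟩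
    simp only [hf, Sym2.map_pair_eq] at h
    rcases Quotient.eq''.mp (h : _ = _) with (rfl | hxy)
    · exact G.loopless f (by rw [hf]; exact rfl)
    · exact hff (by rw [hf, hxy])

end Multigraph

namespace Multigraph

variable {V E : Type*} (G : Multigraph V E)

lemma reach_mono {F F' : Set E} (h : F ⊆ F') {u v : V} (hr : G.Reach F u v) :
    G.Reach F' u v := by
  induction hr with
  | refl => exact .refl
  | tail _ step ih =>
    obtain ⟨f, hf, hf2⟩ := step
    exact ih.tail ⟨f, h hf, hf2⟩

lemma mk_eq_of_parallel {e f : E} (hpar : G.ends f = G.ends e) {x y : V}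
    (hf : G.ends f = s(x, y)) :
    Quotient.mk (G.contractSetoid e) x = Quotient.mk (G.contractSetoid e) y :=
  Quotient.sound (Or.inr (by rw [← hpar, hf]))

lemma reach_of_mk_eq {e : E} {F : Set E} (he : e ∈ F) {u v : V}
    (h : Quotient.mk (G.contractSetoid e) u = Quotient.mk (G.contractSetoid e) v) :
    G.Reach F u v := by
  rcases Quotient.eq''.mp (h : _ = _) with rfl | hxy
  · exact .refl
  · exact Relation.ReflTransGen.single ⟨e, he, hxy⟩

/-- Push a walk in `G` down to a walk in `G/e`. -/
lemma reach_push (e : E) {F : Set E} {u v : V} (h : G.Reach F u v) :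
    (G.contract e).Reach {f | (f : E) ∈ F}
      (Quotient.mk (G.contractSetoid e) u) (Quotient.mk (G.contractSetoid e) v) := by
  induction h with
  | refl => exact .refl
  | @tail b c _ step ih =>
    obtain ⟨f, hfF, hf⟩ := step
    by_cases hfe : f = e ∨ G.ends f = G.ends e
    · have heq : Quotient.mk (G.contractSetoid e) b = Quotient.mk (G.contractSetoid e) c := by
        rcases hfe with rfl | hpar
        · exact Quotient.sound (Or.inr hf)
        · exact G.mk_eq_of_parallel hpar hf
      rwa [← heq]
    · push_neg at hfe
      refine ih.tail ⟨⟨f, hfe⟩, hfF, ?_⟩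
      show (G.ends f).map _ = _
      rw [hf, Sym2.map_pair_eq]

/-- Lift a walk in `G/e` to a walk in `G`, provided `e` itself is available. -/
lemma reach_lift {e : E} {F : Set E} (heF : e ∈ F) {a b} 
    (h : (G.contract e).Reach {f | (f : E) ∈ F} a b) :
    ∀ {u v : V}, Quotient.mk (G.contractSetoid e) u = a →
      Quotient.mk (G.contractSetoid e) v = b → G.Reach F u v := by
  induction h with
  | refl =>
    intro u v hu hv
    exact G.reach_of_mk_eq heF (hu.trans hv.symm)
  | @tail c d _ step ih =>
    intro u v hu hv
    obtain ⟨⟨f, hfe⟩, hfF, hf⟩ := step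
    obtain ⟨⟨x, y⟩, hxy⟩ := Quot.exists_rep (G.ends f)
    have hxy' : G.ends f = s(x, y) := hxy.symm
    have hmap : s(Quotient.mk (G.contractSetoid e) x, Quotient.mk (G.contractSetoid e) y)
        = s(c, d) := by
      have : (G.ends f).map (Quotient.mk (G.contractSetoid e)) = s(c, d) := hf
      rwa [hxy', Sym2.map_pair_eq] at this
    rw [Sym2.eq_iff] at hmap
    rcases hmap with ⟨hx, hy⟩ | ⟨hx, hy⟩
    · have h1 : G.Reach F u x := ih hu hx
      have h2 : G.Reach F x y := Relation.ReflTransGen.single ⟨f, hfF, hxy'⟩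
      have h3 : G.Reach F y v := G.reach_of_mk_eq heF (hy.trans hv.symm)
      exact (h1.trans h2).trans h3
    · have h1 : G.Reach F u y := ih hu hy
      have h2 : G.Reach F y x := Relation.ReflTransGen.single ⟨f, hfF, by rw [hxy', Sym2.eq_swap]⟩
      have h3 : G.Reach F x v := G.reach_of_mk_eq heF (hx.trans hv.symm)
      exact (h1.trans h2).trans h3

end Multigraph
namespace Multigraph

variable {V E : Type*} (G : Multigraph V E)

lemma bond_not_parallel {B : Set E} (hB : G.IsBond B) {e : E} (he : e ∉ B)
    {b : E} (hb : b ∈ B) : G.ends b ≠ G.ends e := by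
  intro hpar
  have h1 : ¬ G.CutSet (B \ {b}) :=
    hB.2 _ (Set.sdiff_singleton_ssubset.mpr hb)
  have h2 : G.ConnectedOn (B \ {b})ᶜ := not_not.mp h1
  apply hB.1
  intro u v
  have hr := h2 u v
  clear h1 h2
  induction hr with
  | refl => exact .refl
  | @tail x y _ step ih =>
    obtain ⟨f, hf, hf2⟩ := step
    by_cases hfb : f = b
    · subst hfb
      exact ih.tail ⟨e, he, by rw [← hpar]; exact hf2⟩
    · have hfB : f ∉ B := fun hfB => (hf ⟨hfB, hfb⟩).elim
      exact ih.tail ⟨f, hfB, hf2⟩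

/-- If `B` is a bond of `G` and `e ∉ B`, then `B` remains a bond of `G/e`. -/
lemma isBond_contract {B : Set E} (hB : G.IsBond B) {e : E} (he : e ∉ B) :
    (G.contract e).IsBond {f | (f : E) ∈ B} := by
  constructor
  · intro hcon
    apply hB.1
    intro u v
    have h := hcon (Quotient.mk (G.contractSetoid e) u) (Quotient.mk (G.contractSetoid e) v)
    exact G.reach_lift (F := Bᶜ) he h rfl rfl
  · intro C' hC' hcut
    apply hcut
    have hD : (Subtype.val '' C') ⊂ B := by
      constructor
      · rintro d ⟨f, hfC, rfl⟩
        exact hC'.1 hfC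
      · intro hsub
        obtain ⟨x, hxB, hxC⟩ := Set.exists_of_ssubset hC'
        obtain ⟨g, hgC, hg⟩ := hsub hxB
        exact hxC (by rwa [Subtype.ext hg] at hgC)
    have hnc : ¬ G.CutSet (Subtype.val '' C') := hB.2 _ hD
    have hcon : G.ConnectedOn (Subtype.val '' C')ᶜ := not_not.mp hnc
    intro a b
    obtain ⟨u, rfl⟩ := Quotient.exists_rep a
    obtain ⟨v, rfl⟩ := Quotient.exists_rep b
    have h := G.reach_push e (hcon u v)
    have hset : {f : {f : E // f ≠ e ∧ G.ends f ≠ G.ends e} | (f : E) ∈ (Subtype.val '' C')ᶜ}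
        = C'ᶜ := by
      ext f
      simp only [Set.mem_setOf_eq, Set.mem_compl_iff, Set.mem_image]
      constructor
      · intro hf hfC; exact hf ⟨f, hfC, rfl⟩
      · rintro hf ⟨g, hgC, hg⟩
        exact hf (by rwa [← Subtype.ext hg.symm] at hgC)
    rwa [hset] at h

end Multigraph
namespace Multigraph

variable {V E : Type*} (G : Multigraph V E)

lemma ncard_bond_contract {B : Set E} (hB : G.IsBond B) {e : E} (he : e ∉ B) :
    {f : {f : E // f ≠ e ∧ G.ends f ≠ G.ends e} | (f : E) ∈ B}.ncard = B.ncard := by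
  have himg : Subtype.val '' {f : {f : E // f ≠ e ∧ G.ends f ≠ G.ends e} | (f : E) ∈ B} = B := by
    ext b
    constructor
    · rintro ⟨f, hf, rfl⟩; exact hf
    · intro hb
      exact ⟨⟨b, fun h => he (h ▸ hb), G.bond_not_parallel hB he hb⟩, hb, rfl⟩
  have h2 := Set.ncard_image_of_injective
    {f : {f : E // f ≠ e ∧ G.ends f ≠ G.ends e} | (f : E) ∈ B} Subtype.val_injective
  rw [himg] at h2
  exact h2.symm

lemma isBond_of_contract {e : E} {C : Set {f : E // f ≠ e ∧ G.ends f ≠ G.ends e}}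
    (hC : (G.contract e).IsBond C) : G.IsBond (Subtype.val '' C) := by
  have heC : e ∉ Subtype.val '' C := by
    rintro ⟨f, -, hf⟩; exact f.2.1 hf
  constructor
  · intro hcon
    apply hC.1
    intro a b
    obtain ⟨u, rfl⟩ := Quotient.exists_rep a
    obtain ⟨v, rfl⟩ := Quotient.exists_rep b
    have h := G.reach_push e (hcon u v)
    have hset : {f : {f : E // f ≠ e ∧ G.ends f ≠ G.ends e} | (f : E) ∈ (Subtype.val '' C)ᶜ}
        = Cᶜ := by
      ext f
      simp only [Set.mem_setOf_eq, Set.mem_compl_iff, Set.mem_image]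
      constructor
      · intro hf hfC; exact hf ⟨f, hfC, rfl⟩
      · rintro hf ⟨g, hgC, hg⟩
        exact hf (by rwa [← Subtype.ext hg.symm] at hgC)
    rwa [hset] at h
  · intro D hD hcut
    apply hcut
    set D' : Set {f : E // f ≠ e ∧ G.ends f ≠ G.ends e} := {f | (f : E) ∈ D} with hD'def
    have hD' : D' ⊂ C := by
      constructor
      · intro f hf
        obtain ⟨g, hgC, hg⟩ := hD.1 hf
        rwa [← Subtype.ext hg.symm] at hgC
      · intro hsub
        obtain ⟨x, hxC, hxD⟩ := Set.exists_of_ssubset hD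
        obtain ⟨g, hgC, rfl⟩ := hxC
        exact hxD (hsub hgC)
    have hcon : (G.contract e).ConnectedOn D'ᶜ := not_not.mp (hC.2 D' hD')
    intro u v
    have heD : e ∈ Dᶜ := fun h => heC (hD.1 h)
    have h := hcon (Quotient.mk (G.contractSetoid e) u) (Quotient.mk (G.contractSetoid e) v)
    exact G.reach_lift (F := Dᶜ) heD h rfl rfl

lemma cutSet_univ (huv : ∃ u v : V, u ≠ v) : G.CutSet (Set.univ : Set E) := by
  intro hcon
  obtain ⟨u, v, huv⟩ := huv
  have h := hcon u v
  rw [Set.compl_univ] at h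
  induction h with
  | refl => exact huv rfl
  | tail _ step _ =>
    obtain ⟨f, hf, -⟩ := step
    exact hf

lemma exists_bond_subset [Finite E] :
    ∀ (n : ℕ) (C : Set E), C.ncard ≤ n → G.CutSet C → ∃ B ⊆ C, G.IsBond B := by
  intro n
  induction n with
  | zero =>
    intro C hC hcut
    have : C = ∅ := by
      rw [← Set.ncard_eq_zero C.toFinite]; omega
    exact ⟨C, subset_rfl, hcut, fun C' hC' => ((this ▸ hC').2 (Set.empty_subset C')).elim⟩
  | succ n ih =>
    intro C hC hcut
    by_cases hmin : ∀ C' ⊂ C, ¬ G.CutSet C'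
    · exact ⟨C, subset_rfl, hcut, hmin⟩
    · push_neg at hmin
      obtain ⟨C', hC', hcut'⟩ := hmin
      have hlt : C'.ncard < C.ncard := Set.ncard_lt_ncard hC' C.toFinite
      obtain ⟨B, hBC', hB⟩ := ih C' (by omega) hcut'
      exact ⟨B, hBC'.trans hC'.subset, hB⟩

lemma exists_max_bond [Finite E] (huv : ∃ u v : V, u ≠ v) :
    ∃ B : Set E, G.IsBond B ∧ B.ncard = G.maxBondSize := by
  obtain ⟨B, -, hB⟩ := G.exists_bond_subset (Set.univ : Set E).ncard Set.univ le_rfl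
    (G.cutSet_univ huv)
  have hne : {n | ∃ C : Set E, G.IsBond C ∧ C.ncard = n}.Nonempty := ⟨B.ncard, B, hB, rfl⟩
  have hbdd : BddAbove {n | ∃ C : Set E, G.IsBond C ∧ C.ncard = n} := by
    refine ⟨Nat.card E, ?_⟩
    rintro n ⟨C, -, rfl⟩
    rw [← Set.ncard_univ]
    exact Set.ncard_le_ncard (Set.subset_univ C) Set.finite_univ
  obtain ⟨C, hC, hCn⟩ := Nat.sSup_mem hne hbdd
  exact ⟨C, hC, hCn⟩

end Multigraph
namespace Multigraph

variable {V E : Type*} (G : Multigraph V E)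

lemma bddAbove_bondSizes [Finite E] :
    BddAbove {n | ∃ C : Set E, G.IsBond C ∧ C.ncard = n} := by
  refine ⟨Nat.card E, ?_⟩
  rintro n ⟨C, -, rfl⟩
  rw [← Set.ncard_univ]
  exact Set.ncard_le_ncard (Set.subset_univ C) Set.finite_univ

lemma exists_notMem_bond [Finite V] (hG : G.Connected) (hV : 2 < Nat.card V)
    {B : Set E} (hB : G.IsBond B) : ∃ e : E, e ∉ B := by
  by_contra h
  push_neg at h
  have hBuniv : B = Set.univ := Set.eq_univ_of_forall h
  -- get an edge
  have hnontriv : Nontrivial V := Finite.one_lt_card_iff_nontrivial.mp (by omega)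
  obtain ⟨u, v, huv⟩ := exists_pair_ne V
  obtain ⟨b₀⟩ : Nonempty E := by
    rcases (hG u v).cases_head with rfl | ⟨c, ⟨f, -, -⟩, -⟩
    · exact absurd rfl huv
    · exact ⟨f⟩
  have hcut : G.CutSet (Set.univ \ {b₀}) := by
    intro hcon
    obtain ⟨⟨p, q⟩, hpq⟩ := Quot.exists_rep (G.ends b₀)
    have hpq' : G.ends b₀ = s(p, q) := hpq.symm
    obtain ⟨w, hwp, hwq⟩ : ∃ w : V, w ≠ p ∧ w ≠ q := by
      by_contra hw
      push_neg at hw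
      have hsub : (Set.univ : Set V) ⊆ insert p {q} := by
        intro x _
        rcases eq_or_ne x p with rfl | hxp
        · exact Set.mem_insert _ _
        · exact Set.mem_insert_of_mem _ (hw x hxp)
      have h1 : (Set.univ : Set V).ncard ≤ (insert p ({q} : Set V)).ncard :=
        Set.ncard_le_ncard hsub (Set.toFinite _)
      have h2 : (insert p ({q} : Set V)).ncard ≤ 2 := by
        have := Set.ncard_insert_le p ({q} : Set V)
        simpa [Set.ncard_singleton] using this
      rw [Set.ncard_univ] at h1
      omega
    have hr := hcon w p
    have hcompl : ((Set.univ \ {b₀}) : Set E)ᶜ = {b₀} := by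
      rw [← Set.compl_eq_univ_diff, compl_compl]
    rw [hcompl] at hr
    rcases hr.cases_head with heq | ⟨c, ⟨f, hf, hf2⟩, -⟩
    · exact hwp heq
    · rw [Set.mem_singleton_iff] at hf
      subst hf
      rw [hpq', Sym2.eq_iff] at hf2
      rcases hf2 with ⟨rfl, -⟩ | ⟨-, rfl⟩
      · exact hwp rfl
      · exact hwq rfl
  exact hB.2 (Set.univ \ {b₀})
    (by rw [hBuniv]; exact Set.sdiff_singleton_ssubset.mpr trivial) hcut

end Multigraph

open Multigraph in
/-- In a connected loopless multigraph with more than two vertices there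
is an edge whose contraction preserves the maximum bond size; in particular for any maximum
bond `B` there is an edge `e ∉ B` such that `B` is still a bond of `G/e`. -/
theorem exists_contract_maxBondSize_eq {V E : Type*} [Finite V] [Finite E]
    (G : Multigraph V E) (hG : G.Connected) (hV : 2 < Nat.card V) :
    (∃ e : E, (G.contract e).maxBondSize = G.maxBondSize) ∧
      ∀ B : Set E, G.IsBond B → B.ncard = G.maxBondSize →
        ∃ e : E, e ∉ B ∧ (G.contract e).IsBond {f | (f : E) ∈ B} := by
  have hnontriv : ∃ u v : V, u ≠ v := by
    have : Nontrivial V := Finite.one_lt_card_iff_nontrivial.mp (by omega)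
    exact exists_pair_ne V
  have hpart2 : ∀ B : Set E, G.IsBond B →
      ∃ e : E, e ∉ B ∧ (G.contract e).IsBond {f | (f : E) ∈ B} := by
    intro B hB
    obtain ⟨e, he⟩ := G.exists_notMem_bond hG hV hB
    exact ⟨e, he, G.isBond_contract hB he⟩
  obtain ⟨B, hB, hBn⟩ := G.exists_max_bond hnontriv
  obtain ⟨e, he, hbond⟩ := hpart2 B hB
  refine ⟨⟨e, ?_⟩, fun B' hB' _ => hpart2 B' hB'⟩
  unfold Multigraph.maxBondSize
  apply le_antisymm
  · refine csSup_le ?_ ?_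
    · exact ⟨_, _, hbond, rfl⟩
    rintro n ⟨C, hC, rfl⟩
    apply le_csSup (G.bddAbove_bondSizes)
    exact ⟨Subtype.val '' C, G.isBond_of_contract hC,
      Set.ncard_image_of_injective _ Subtype.val_injective⟩
  · have h1 : B.ncard = {f : {f : E // f ≠ e ∧ G.ends f ≠ G.ends e} | (f : E) ∈ B}.ncard :=
      (G.ncard_bond_contract hB he).symm
    calc sSup {n | ∃ C : Set E, G.IsBond C ∧ C.ncard = n}
        = B.ncard := by rw [hBn]; rfl
      _ ≤ sSup {n | ∃ C, (G.contract e).IsBond C ∧ C.ncard = n} := by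
          rw [h1]
          exact le_csSup ((G.contract e).bddAbove_bondSizes) ⟨_, hbond, rfl⟩
end

section
/- Let G = (V,E) be a connected loopless multigraph with edge weights w : E → ℝ, and let T₁ and T₂ be two (distinct) minimum spanning trees of G with respect to w. Let e = {u,v} be an edge contained in neither T₁ nor T₂, and for i ∈ {1,2} let fᵢ be a maximum-weight edge on the unique u–v path in Tᵢ. Then w(f₁) = w(f₂). -/
open scoped Classical

namespace Multigraph

variable {V E : Type*} (G : Multigraph V E)

lemma reach_symm {F : Set E} {u v : V} (h : G.Reach F u v) : G.Reach F v u := by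
  refine Std.Symm.symm (r := Relation.ReflTransGen (fun x y => ∃ e ∈ F, G.ends e = s(x, y)))
    (self := @Relation.ReflTransGen.stdSymm _ _ ⟨?_⟩) _ _ h
  rintro x y ⟨e, he, hv⟩
  exact ⟨e, he, by rwa [Sym2.eq_swap]⟩

lemma reach_single {F : Set E} {g : E} (hg : g ∈ F) {x y : V}
    (h : G.ends g = s(x, y)) : G.Reach F x y :=
  Relation.ReflTransGen.single ⟨g, hg, h⟩

/-- The equivalence relation of reachability. -/
def reachSetoid (F : Set E) : Setoid V where
  r := G.Reach F
  iseqv := ⟨fun _ => Relation.ReflTransGen.refl, G.reach_symm, Relation.ReflTransGen.trans⟩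

lemma exists_ends (g : E) : ∃ x y : V, G.ends g = s(x, y) := by
  induction G.ends g using Sym2.inductionOn with
  | hf x y => exact ⟨x, y, rfl⟩

lemma reach_insert_elim {F : Set E} {g : E} {x y : V} (hg : G.ends g = s(x, y)) :
    ∀ {a b : V}, G.Reach (insert g F) a b →
      G.Reach F a b ∨ G.Reach F a x ∨ G.Reach F a y := by
  intro a b h
  induction h using Relation.ReflTransGen.head_induction_on with
  | refl => exact Or.inl Relation.ReflTransGen.refl
  | head step rest ih =>
    obtain ⟨e', he', hends⟩ := step
    rcases he' with rfl | he'F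
    · rw [hg] at hends
      rcases Sym2.eq_iff.mp hends with ⟨rfl, rfl⟩ | ⟨rfl, rfl⟩
      · exact Or.inr (Or.inl Relation.ReflTransGen.refl)
      · exact Or.inr (Or.inr Relation.ReflTransGen.refl)
    · rcases ih with h' | h' | h'
      · exact Or.inl (h'.head ⟨e', he'F, hends⟩)
      · exact Or.inr (Or.inl (h'.head ⟨e', he'F, hends⟩))
      · exact Or.inr (Or.inr (h'.head ⟨e', he'F, hends⟩))

lemma reach_insert_cases {F : Set E} {g : E} {x y : V} (hg : G.ends g = s(x, y))
    {a b : V} (h : G.Reach (insert g F) a b) :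
    G.Reach F a b ∨ (G.Reach F a x ∧ G.Reach F y b) ∨ (G.Reach F a y ∧ G.Reach F x b) := by
  rcases G.reach_insert_elim hg h with ha | ha | ha
  · exact Or.inl ha
  · rcases G.reach_insert_elim hg (G.reach_symm h) with hb | hb | hb
    · exact Or.inl (G.reach_symm hb)
    · exact Or.inl (ha.trans (G.reach_symm hb))
    · exact Or.inr (Or.inl ⟨ha, G.reach_symm hb⟩)
  · rcases G.reach_insert_elim hg (G.reach_symm h) with hb | hb | hb
    · exact Or.inl (G.reach_symm hb)
    · exact Or.inr (Or.inr ⟨ha, G.reach_symm hb⟩)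
    · exact Or.inl (ha.trans (G.reach_symm hb))

lemma acyclic_anti {F F' : Set E} (h : F ⊆ F') (hF' : G.Acyclic F') : G.Acyclic F :=
  fun e heF u v hends hr =>
    hF' e (h heF) u v hends (G.reach_mono (Set.diff_subset_diff_left h) hr)

lemma card_quot_add_ncard_le [Finite V] [Finite E] (F : Set E) :
    G.Acyclic F → Nat.card (Quotient (G.reachSetoid F)) + F.ncard ≤ Nat.card V := by
  refine Set.Finite.induction_on
    (motive := fun F _ => G.Acyclic F →
      Nat.card (Quotient (G.reachSetoid F)) + F.ncard ≤ Nat.card V)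
    F F.toFinite ?_ ?_
  · intro _
    simp only [Set.ncard_empty, add_zero]
    exact Nat.card_le_card_of_surjective _ Quotient.mk_surjective
  · intro a s ha hs ih hF
    have hacy : G.Acyclic s := G.acyclic_anti (Set.subset_insert a s) hF
    have ihs := ih hacy
    obtain ⟨x, y, hxy⟩ := G.exists_ends a
    have hmap : ∀ p q : V, (G.reachSetoid s).r p q → (G.reachSetoid (insert a s)).r p q :=
      fun p q h => G.reach_mono (Set.subset_insert a s) h
    set φ : Quotient (G.reachSetoid s) → Quotient (G.reachSetoid (insert a s)) :=
      Quotient.map' id (fun p q h => hmap p q h) with hφ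
    have hsurj : Function.Surjective φ := by
      intro q
      obtain ⟨p, rfl⟩ := Quotient.mk_surjective q
      exact ⟨Quotient.mk _ p, rfl⟩
    have hninj : ¬ Function.Injective φ := by
      intro hinj
      have hxyr : G.Reach (insert a s) x y := G.reach_single (Set.mem_insert a s) hxy
      have : (Quotient.mk (G.reachSetoid s) x) = Quotient.mk (G.reachSetoid s) y := by
        apply hinj
        exact Quotient.sound' hxyr
      have hr : G.Reach s x y := Quotient.exact' this
      have := hF a (Set.mem_insert a s) x y hxy
      rw [Set.insert_diff_of_mem _ (Set.mem_singleton a), Set.diff_singleton_eq_self ha] at this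
      exact this hr
    have hlt : Nat.card (Quotient (G.reachSetoid (insert a s)))
        < Nat.card (Quotient (G.reachSetoid s)) := by
      classical
      letI := Fintype.ofFinite V
      letI := Fintype.ofFinite (Quotient (G.reachSetoid s))
      letI := Fintype.ofFinite (Quotient (G.reachSetoid (insert a s)))
      rw [Nat.card_eq_fintype_card, Nat.card_eq_fintype_card]
      exact Fintype.card_lt_of_surjective_not_injective φ hsurj hninj
    rw [Set.ncard_insert_of_notMem ha hs]
    omega

lemma IsSpanningTree.connectedOn [Finite V] [Finite E] {T : Set E}
    (hT : G.IsSpanningTree T) : G.ConnectedOn T := by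
  intro u v
  have hpos : 0 < Nat.card V := Nat.card_pos_iff.mpr ⟨⟨u⟩, inferInstance⟩
  have h := G.card_quot_add_ncard_le T hT.2
  rw [hT.1] at h
  have h1 : Nat.card (Quotient (G.reachSetoid T)) ≤ 1 := by omega
  have : Subsingleton (Quotient (G.reachSetoid T)) :=
    Finite.card_le_one_iff_subsingleton.mp h1
  have heq : Quotient.mk (G.reachSetoid T) u = Quotient.mk (G.reachSetoid T) v :=
    Subsingleton.elim _ _
  exact Quotient.eq''.mp (heq : _ = _)

lemma exists_min_reach [Finite E] {T : Set E} {u v : V} (h : G.Reach T u v) :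
    ∃ P ⊆ T, G.Reach P u v ∧ ∀ g ∈ P, ¬ G.Reach (P \ {g}) u v := by
  generalize hn : T.ncard = n
  induction n using Nat.strong_induction_on generalizing T with
  | _ n ih =>
    by_cases hg : ∃ g ∈ T, G.Reach (T \ {g}) u v
    · obtain ⟨g, hgT, hr⟩ := hg
      obtain ⟨P, hP1, hP2, hP3⟩ := ih (T \ {g}).ncard
        (by rw [← hn]; exact Set.ncard_diff_singleton_lt_of_mem hgT T.toFinite) hr rfl
      exact ⟨P, hP1.trans Set.diff_subset, hP2, hP3⟩
    · push_neg at hg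
      exact ⟨T, subset_rfl, h, hg⟩

lemma min_reach_bridge {T P : Set E} (hT : G.Acyclic T) (hPT : P ⊆ T) {u v : V}
    (hmin : ∀ g ∈ P, ¬ G.Reach (P \ {g}) u v) (hP : G.Reach P u v) :
    ∀ g ∈ P, ¬ G.Reach (T \ {g}) u v := by
  intro g hgP hTuv
  obtain ⟨x, y, hxy⟩ := G.exists_ends g
  have h1 : G.Reach (insert g (P \ {g})) u v := by
    rwa [Set.insert_diff_singleton, Set.insert_eq_self.mpr hgP]
  have hsub : P \ {g} ⊆ T \ {g} := Set.diff_subset_diff_left hPT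
  have hacy := hT g (hPT hgP) x y hxy
  rcases G.reach_insert_cases hxy h1 with h' | ⟨hux, hyv⟩ | ⟨huy, hxv⟩
  · exact hmin g hgP h'
  · exact hacy (((G.reach_symm (G.reach_mono hsub hux)).trans hTuv).trans
      (G.reach_symm (G.reach_mono hsub hyv)))
  · exact hacy (((G.reach_mono hsub hxv).trans (G.reach_symm hTuv)).trans
      (G.reach_mono hsub huy))

lemma exists_crossing {P R : Set E} {v : V} :
    ∀ {a : V}, G.Reach P a v → ¬ G.Reach R a v →
    ∃ g ∈ P, ∃ x y : V, G.ends g = s(x, y) ∧ ¬ G.Reach R x y := by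
  intro a h
  induction h using Relation.ReflTransGen.head_induction_on with
  | refl => exact fun hR => absurd Relation.ReflTransGen.refl hR
  | @head a' c step rest ih =>
    intro hR
    obtain ⟨g, hgP, hends⟩ := step
    by_cases hac : G.Reach R a' c
    · exact ih (fun h' => hR (hac.trans h'))
    · exact ⟨g, hgP, a', c, hends, hac⟩

lemma swap_spanning [Finite V] [Finite E] {T : Set E} (hT : G.IsSpanningTree T)
    {f g : E} (hf : f ∈ T) {x y : V} (hg : G.ends g = s(x, y))
    (hxy : ¬ G.Reach (T \ {f}) x y) :
    G.IsSpanningTree (insert g (T \ {f})) := by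
  have hgnot : g ∉ T \ {f} := fun hgm => hxy (G.reach_single hgm hg)
  constructor
  · rw [Set.ncard_insert_of_notMem hgnot (T.toFinite.diff (t := {f})),
      Set.ncard_diff_singleton_of_mem hf, ← hT.1]
    have : 0 < T.ncard := (Set.ncard_pos T.toFinite).mpr ⟨f, hf⟩
    omega
  · intro e' he' a b hab hreach
    rcases he' with rfl | he'
    · rw [Set.insert_diff_of_mem _ (Set.mem_singleton e'),
        Set.diff_singleton_eq_self hgnot] at hreach
      rw [hg] at hab
      rcases Sym2.eq_iff.mp hab with ⟨rfl, rfl⟩ | ⟨rfl, rfl⟩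
      · exact hxy hreach
      · exact hxy (G.reach_symm hreach)
    · have hne : g ≠ e' := fun h => hgnot (h ▸ he')
      rw [Set.insert_diff_of_notMem _ (by simpa using hne)] at hreach
      have hsub : (T \ {f}) \ {e'} ⊆ T \ {e'} :=
        Set.diff_subset_diff_left Set.diff_subset
      have hacy := hT.2 e' he'.1 a b hab
      have hxyT : ¬ G.Reach (T \ {f}) x y := hxy
      have hstep : G.Reach (T \ {f}) a b := G.reach_single he' hab
      rcases G.reach_insert_cases hg hreach with h' | ⟨hax, hyb⟩ | ⟨hay, hxb⟩
      · exact hacy (G.reach_mono hsub h')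
      · have hsub2 : (T \ {f}) \ {e'} ⊆ T \ {f} := Set.diff_subset
        exact hxyT (((G.reach_symm (G.reach_mono hsub2 hax)).trans hstep).trans
          (G.reach_symm (G.reach_mono hsub2 hyb)))
      · have hsub2 : (T \ {f}) \ {e'} ⊆ T \ {f} := Set.diff_subset
        exact hxyT (((G.reach_mono hsub2 hxb).trans (G.reach_symm hstep)).trans
          (G.reach_mono hsub2 hay))

lemma weight_eq [Finite E] (w : E → ℝ) (S : Set E) :
    weight w S = ∑ e ∈ S.toFinite.toFinset, w e := by
  rw [weight, ← Set.Finite.coe_toFinset S.toFinite, finsum_mem_coe_finset]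
  exact Finset.sum_congr (by ext a; simp) (fun _ _ => rfl)

lemma weight_insert [Finite E] (w : E → ℝ) {S : Set E} {g : E} (hg : g ∉ S) :
    weight w (insert g S) = w g + weight w S := by
  classical
  rw [weight_eq, weight_eq]
  rw [show (insert g S).toFinite.toFinset = insert g S.toFinite.toFinset by
    ext a; simp]
  rw [Finset.sum_insert (by simpa using hg)]

lemma weight_diff [Finite E] (w : E → ℝ) {S : Set E} {f : E} (hf : f ∈ S) :
    weight w (S \ {f}) = weight w S - w f := by
  have h1 : weight w S = w f + weight w (S \ {f}) := by
    conv_lhs => rw [show S = insert f (S \ {f}) from by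
      rw [Set.insert_diff_singleton, Set.insert_eq_self.mpr hf]]
    exact weight_insert w (by simp)
  linarith

lemma key_le [Finite V] [Finite E] (w : E → ℝ) {T₁ T₂ : Set E}
    (hT₁ : G.IsMST w T₁) (hT₂ : G.IsMST w T₂) {u v : V} {f₁ f₂ : E}
    (hmax₁ : ∀ g, G.OnPath T₁ u v g → w g ≤ w f₁)
    (hf₂ : G.OnPath T₂ u v f₂) : w f₂ ≤ w f₁ := by
  have hR1 : G.Reach T₁ u v := hT₁.1.connectedOn G u v
  obtain ⟨P, hPT, hPuv, hmin⟩ := G.exists_min_reach hR1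
  obtain ⟨g, hgP, x, y, hgxy, hcross⟩ := G.exists_crossing hPuv hf₂.2
  have hbridge := G.min_reach_bridge hT₁.1.2 hPT hmin hPuv g hgP
  have hwg : w g ≤ w f₁ := hmax₁ g ⟨hPT hgP, hbridge⟩
  have hgnot : g ∉ T₂ \ {f₂} := fun hgm => hcross (G.reach_single hgm hgxy)
  have hT' := G.swap_spanning hT₂.1 hf₂.1 hgxy hcross
  have hle := hT₂.2 _ hT'
  rw [weight_insert w hgnot, weight_diff w hf₂.1] at hle
  linarith

end Multigraph

open Multigraph in
/-- If `T₁` and `T₂` are minimum spanning trees, `e = {u,v}` is an edge in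
neither of them, and `fᵢ` is a maximum-weight edge on the unique `u`-`v` path in `Tᵢ`,
then `w f₁ = w f₂`. -/
theorem mst_path_maxWeight_eq {V E : Type*} [Finite V] [Finite E]
    (G : Multigraph V E) (hG : G.Connected) (w : E → ℝ)
    (T₁ T₂ : Set E) (hT₁ : G.IsMST w T₁) (hT₂ : G.IsMST w T₂)
    (e : E) (u v : V) (he : G.ends e = s(u, v)) (heT₁ : e ∉ T₁) (heT₂ : e ∉ T₂)
    (f₁ f₂ : E)
    (hf₁ : G.OnPath T₁ u v f₁) (hmax₁ : ∀ g, G.OnPath T₁ u v g → w g ≤ w f₁)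
    (hf₂ : G.OnPath T₂ u v f₂) (hmax₂ : ∀ g, G.OnPath T₂ u v g → w g ≤ w f₂) :
    w f₁ = w f₂ := by
  exact le_antisymm (G.key_le w hT₂ hT₁ hmax₂ hf₁) (G.key_le w hT₁ hT₂ hmax₁ hf₂)
end

section
/- Let M be a matroid on finite ground set E with weights w : E → ℝ, and let B₁ and B₂ be two minimum-weight bases of M. Let e ∉ B₁ ∪ B₂, and for i ∈ {1,2} let f_i be a maximum-weight element of the unique circuit C(B_i ∪ {e}) contained in B_i ∪ {e}, chosen among the elements other than e. Then w(f₁) = w(f₂). -/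
open scoped Classical

namespace Matroid

variable {α : Type*}

/-- A circuit of a matroid: an inclusion-wise minimal dependent set. -/
def IsCircuit' (M : Matroid α) (C : Set α) : Prop :=
  M.Dep C ∧ ∀ D ⊂ C, ¬ M.Dep D

/-- A cocircuit of `M`: a circuit of the dual matroid `M✶`; equivalently, an
inclusion-wise minimal subset of the ground set meeting every base of `M`. -/
def IsCocircuit' (M : Matroid α) (C : Set α) : Prop :=
  M✶.IsCircuit' C

/-- `c*(M)`, the maximum size of a cocircuit of `M`. -/
noncomputable def maxCocircuitSize (M : Matroid α) : ℕ :=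
  sSup {n | ∃ C, M.IsCocircuit' C ∧ C.ncard = n}

/-- `M` is loopless: every single element of the ground set is independent. -/
def IsLoopless (M : Matroid α) : Prop := ∀ e ∈ M.E, M.Indep {e}

/-- `r(M)`, the rank of `M`: the common size of its bases. -/
noncomputable def rankNat (M : Matroid α) : ℕ :=
  sSup {n | ∃ B, M.IsBase B ∧ B.ncard = n}

/-- The contraction `M/e`, defined as the dual of the deletion of `e` from the dual,
`M/e = (M✶ ∖ e)✶`.  It is the matroid on `M.E ∖ {e}` whose independent sets, for a
non-loop `e`, are exactly the sets `F ⊆ M.E ∖ {e}` with `F ∪ {e}` independent in `M`. -/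
noncomputable def contractElem (M : Matroid α) (e : α) : Matroid α :=
  (M✶ ↾ (M.E \ {e}))✶

/-- A minimum-weight base of `M` with respect to the weights `w`. -/
def IsMinBase (M : Matroid α) (w : α → ℝ) (B : Set α) : Prop :=
  M.IsBase B ∧ ∀ B', M.IsBase B' → ∑ᶠ x ∈ B, w x ≤ ∑ᶠ x ∈ B', w x

end Matroid

namespace Matroid

open Set

variable {α : Type*} {M : Matroid α} {C B S : Set α} {e f g : α}

/-- An element of a circuit is in the closure of the rest of the circuit. -/
lemma IsCircuit'.mem_closure_diff' (hC : M.IsCircuit' C) (hx : f ∈ C) :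
    f ∈ M.closure (C \ {f}) := by
  have hCE : C ⊆ M.E := hC.1.subset_ground
  have hI : M.Indep (C \ {f}) := by
    have := hC.2 (C \ {f}) (sdiff_singleton_ssubset.2 hx)
    rwa [not_dep_iff (diff_subset.trans hCE)] at this
  have hdep : M.Dep (insert f (C \ {f})) := by
    rw [insert_diff_singleton, insert_eq_of_mem hx]; exact hC.1
  exact (hI.insert_dep_iff.1 hdep).1

/-- Weight of a one-element exchange. -/
lemma sum_exchange_aux (w : α → ℝ) (hS : S.Finite) (hg : g ∉ S) (he : e ∈ S) :
    ∑ᶠ x ∈ insert g (S \ {e}), w x = w g + (∑ᶠ x ∈ S, w x) - w e := by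
  have h1 : ∑ᶠ x ∈ insert g (S \ {e}), w x = w g + ∑ᶠ x ∈ S \ {e}, w x :=
    finsum_mem_insert w (fun h => hg h.1) hS.sdiff
  have h2 : ∑ᶠ x ∈ S, w x = w e + ∑ᶠ x ∈ S \ {e}, w x := by
    conv_lhs => rw [show S = insert e (S \ {e}) by
      rw [insert_diff_singleton, insert_eq_of_mem he]]
    exact finsum_mem_insert w (fun h => h.2 rfl) hS.sdiff
  rw [h1, h2]; ring

/-- If `B` is a base, `e ∉ B`, `C ⊆ insert e B` is a circuit and `f ∈ C \ {e}`, then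
`insert e (B \ {f})` is a base. -/
lemma exchange_base_aux (hB : M.IsBase B) (heE : e ∈ M.E) (heB : e ∉ B)
    (hC : M.IsCircuit' C) (hCB : C ⊆ insert e B) (hfC : f ∈ C) (hfe : f ≠ e) :
    M.IsBase (insert e (B \ {f})) := by
  have hfB : f ∈ B := by
    rcases hCB hfC with h | h
    · exact absurd h hfe
    · exact h
  have hecl : e ∉ M.closure (B \ {f}) := by
    intro hecl
    have h1 : f ∈ M.closure (C \ {f}) := hC.mem_closure_diff' hfC
    have h2 : C \ {f} ⊆ M.closure (B \ {f}) := by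
      intro x hx
      rcases hCB hx.1 with rfl | hxB
      · exact hecl
      · exact M.mem_closure_of_mem ⟨hxB, hx.2⟩ (diff_subset.trans hB.subset_ground)
    exact hB.indep.notMem_closure_diff_of_mem hfB
      (M.closure_subset_closure_of_subset_closure h2 h1)
  have hind : M.Indep (insert e (B \ {f})) :=
    ((hB.indep.subset diff_subset).insert_indep_iff_of_notMem
      (fun h => heB h.1)).2 ⟨heE, hecl⟩
  exact hB.exchange_isBase_of_indep heB hind

/-- Key lemma: if `B` is a minimum-weight base, `C ⊆ insert e B` the fundamental circuit of
`e ∉ B`, and `f` a maximum-weight element of `C \ {e}`, then every base `B'` containing `e`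
has weight at least `w(B) + w e - w f`. -/
lemma key_aux [M.Finite] (w : α → ℝ) (hB : M.IsMinBase w B) (heB : e ∉ B)
    (hC : M.IsCircuit' C) (hCB : C ⊆ insert e B)
    (hf : f ∈ C ∧ f ≠ e ∧ ∀ g ∈ C, g ≠ e → w g ≤ w f)
    {B' : Set α} (hB' : M.IsBase B') (heB' : e ∈ B') :
    (∑ᶠ x ∈ B, w x) + w e - w f ≤ ∑ᶠ x ∈ B', w x := by
  have heC : e ∈ C := by
    by_contra heC
    have hCsub : C ⊆ B := fun x hx => (hCB hx).resolve_left (fun h => heC (h ▸ hx))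
    exact (hB.1.indep.subset hCsub).not_dep hC.1
  obtain ⟨g, hgC, hge, hgcl⟩ : ∃ g ∈ C, g ≠ e ∧ g ∉ M.closure (B' \ {e}) := by
    by_contra h
    push_neg at h
    have hsub : C \ {e} ⊆ M.closure (B' \ {e}) := fun x hx => h x hx.1 hx.2
    have : e ∈ M.closure (B' \ {e}) :=
      M.closure_subset_closure_of_subset_closure hsub (hC.mem_closure_diff' heC)
    exact hB'.indep.notMem_closure_diff_of_mem heB' this
  have hgE : g ∈ M.E := hC.1.subset_ground hgC
  have hgB' : g ∉ B' := by
    intro h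
    exact hgcl (M.mem_closure_of_mem ⟨h, hge⟩ (diff_subset.trans hB'.subset_ground))
  have hind : M.Indep (insert g (B' \ {e})) :=
    ((hB'.indep.subset diff_subset).insert_indep_iff_of_notMem
      (fun h => hgB' h.1)).2 ⟨hgE, hgcl⟩
  have hbase : M.IsBase (insert g (B' \ {e})) := hB'.exchange_isBase_of_indep hgB' hind
  have hfin : B'.Finite := M.ground_finite.subset hB'.subset_ground
  have hle := hB.2 _ hbase
  rw [sum_exchange_aux w hfin hgB' heB'] at hle
  have hwg : w g ≤ w f := hf.2.2 g hgC hge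
  linarith

end Matroid

open Matroid in
/-- If `B₁`, `B₂` are minimum-weight bases of `M`, `e ∉ B₁ ∪ B₂`, `Cᵢ` is
the unique circuit contained in `Bᵢ ∪ {e}` and `fᵢ` is a maximum-weight element of
`Cᵢ ∖ {e}`, then `w f₁ = w f₂`. -/
theorem minBase_fundCircuit_maxWeight_eq {α : Type*} (M : Matroid α) [M.Finite]
    (w : α → ℝ) (B₁ B₂ : Set α)
    (hB₁ : M.IsMinBase w B₁) (hB₂ : M.IsMinBase w B₂)
    (e : α) (he : e ∈ M.E) (heB : e ∉ B₁ ∪ B₂)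
    (C₁ C₂ : Set α)
    (hC₁ : M.IsCircuit' C₁ ∧ C₁ ⊆ insert e B₁) (hC₂ : M.IsCircuit' C₂ ∧ C₂ ⊆ insert e B₂)
    (f₁ f₂ : α)
    (hf₁ : f₁ ∈ C₁ ∧ f₁ ≠ e ∧ ∀ g ∈ C₁, g ≠ e → w g ≤ w f₁)
    (hf₂ : f₂ ∈ C₂ ∧ f₂ ≠ e ∧ ∀ g ∈ C₂, g ≠ e → w g ≤ w f₂) :
    w f₁ = w f₂ := by
  have heB1 : e ∉ B₁ := fun h => heB (Or.inl h)
  have heB2 : e ∉ B₂ := fun h => heB (Or.inr h)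
  have hf₁B : f₁ ∈ B₁ := by
    rcases hC₁.2 hf₁.1 with h | h
    · exact absurd h hf₁.2.1
    · exact h
  have hf₂B : f₂ ∈ B₂ := by
    rcases hC₂.2 hf₂.1 with h | h
    · exact absurd h hf₂.2.1
    · exact h
  have hbase₁ : M.IsBase (insert e (B₁ \ {f₁})) :=
    exchange_base_aux hB₁.1 he heB1 hC₁.1 hC₁.2 hf₁.1 hf₁.2.1
  have hbase₂ : M.IsBase (insert e (B₂ \ {f₂})) :=
    exchange_base_aux hB₂.1 he heB2 hC₂.1 hC₂.2 hf₂.1 hf₂.2.1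
  have hfin₁ : B₁.Finite := M.ground_finite.subset hB₁.1.subset_ground
  have hfin₂ : B₂.Finite := M.ground_finite.subset hB₂.1.subset_ground
  have hsum₁ : ∑ᶠ x ∈ insert e (B₁ \ {f₁}), w x = w e + (∑ᶠ x ∈ B₁, w x) - w f₁ :=
    sum_exchange_aux w hfin₁ heB1 hf₁B
  have hsum₂ : ∑ᶠ x ∈ insert e (B₂ \ {f₂}), w x = w e + (∑ᶠ x ∈ B₂, w x) - w f₂ :=
    sum_exchange_aux w hfin₂ heB2 hf₂B
  have h12 := key_aux w hB₂ heB2 hC₂.1 hC₂.2 hf₂ hbase₁ (Set.mem_insert e _)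
  have h21 := key_aux w hB₁ heB1 hC₁.1 hC₁.2 hf₁ hbase₂ (Set.mem_insert e _)
  rw [hsum₁] at h12
  rw [hsum₂] at h21
  have hle₁ := hB₁.2 _ hB₂.1
  have hle₂ := hB₂.2 _ hB₁.1
  linarith
end

section
/- Let M be a matroid on finite ground set E with weights w : E → ℝ, let B^OPT be a minimum-weight basis of M, and let e ∈ E be a non-loop element. Define e* := e if e lies in some minimum-weight basis of M, and otherwise let e* be a maximum-weight element other than e of the unique circuit contained in B^OPT ∪ {e}. Then the minimum weight of a basis of the contraction M/e equals the minimum weight of a basis of M minus w(e*). -/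
open scoped Classical

namespace Matroid

open Set

variable {α : Type*}

/-- Bases of the single-element contraction of a non-loop. -/
lemma aux_contractElem_base_iff (M : Matroid α) {e : α} (he : e ∈ M.E)
    (hel : M.Indep {e}) {B : Set α} :
    (M.contractElem e).IsBase B ↔ B ⊆ M.E \ {e} ∧ M.IsBase (insert e B) := by
  have hXE : M.E \ {e} ⊆ M✶.E := by rw [dual_ground]; exact diff_subset
  obtain ⟨B₀, hB₀, heB₀⟩ := hel.exists_isBase_superset
  have hsp : M✶.Spanning (M.E \ {e}) := by
    rw [spanning_iff_exists_isBase_subset hXE]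
    exact ⟨M.E \ B₀, hB₀.compl_isBase_dual, diff_subset_diff_right heB₀⟩
  have hset : ∀ B' : Set α, B' ⊆ M.E \ {e} → M.E \ ((M.E \ {e}) \ B') = insert e B' := by
    intro B' hB'
    rw [diff_diff_right, Set.diff_diff_cancel_left (singleton_subset_iff.2 he),
      inter_eq_self_of_subset_right (hB'.trans diff_subset), singleton_union]
  constructor
  · intro h
    rw [contractElem, dual_isBase_iff'] at h
    obtain ⟨h1, h2⟩ := h
    rw [restrict_ground_eq] at h1 h2
    rw [isBase_restrict_iff hXE] at h1
    obtain ⟨B', hB', hB'X⟩ := hsp.exists_isBase_subset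
    have hbase := h1.isBase_of_isBase_subset hB' hB'X
    rw [dual_isBase_iff (show (M.E \ {e}) \ B ⊆ M.E from diff_subset.trans diff_subset),
      hset B h2] at hbase
    exact ⟨h2, hbase⟩
  · rintro ⟨h2, hbase⟩
    rw [contractElem, dual_isBase_iff', restrict_ground_eq]
    refine ⟨?_, h2⟩
    rw [isBase_restrict_iff hXE]
    have hdb : M✶.IsBase ((M.E \ {e}) \ B) := by
      rw [dual_isBase_iff (show (M.E \ {e}) \ B ⊆ M.E from diff_subset.trans diff_subset),
        hset B h2]
      exact hbase
    exact hdb.isBasis_of_subset hXE diff_subset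

/-- Every element of a circuit is in the closure of the rest of the circuit. -/
lemma aux_circuit_mem_closure {M : Matroid α} {C : Set α} (hC : M.IsCircuit' C) {f : α}
    (hf : f ∈ C) : f ∈ M.closure (C \ {f}) := by
  have hCE := hC.1.subset_ground
  have hindep : M.Indep (C \ {f}) := by
    by_contra h
    exact hC.2 _ (sdiff_singleton_ssubset.2 hf) ⟨h, diff_subset.trans hCE⟩
  have hdep : M.Dep (insert f (C \ {f})) := by
    rw [insert_diff_singleton, insert_eq_of_mem hf]
    exact hC.1
  rw [hindep.insert_dep_iff] at hdep
  exact hdep.1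

end Matroid

open Matroid Set in
/-- Let `B^OPT` be a minimum-weight base of `M` and `e` a non-loop element.
With `e* := e` if `e` lies in some minimum-weight base of `M`, and otherwise `e*` a
maximum-weight element other than `e` of the unique circuit contained in `B^OPT ∪ {e}`:
the minimum weight of a base of the contraction `M/e` equals the minimum weight of a base of
`M` minus `w e*`. -/
theorem contractElem_minBase_weight {α : Type*} (M : Matroid α) [M.Finite]
    (w : α → ℝ) (BOPT : Set α) (hOPT : M.IsMinBase w BOPT)
    (e : α) (he : e ∈ M.E) (hel : M.Indep {e}) (estar : α)
    (hstar : ((∃ B, M.IsMinBase w B ∧ e ∈ B) ∧ estar = e) ∨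
      ((¬ ∃ B, M.IsMinBase w B ∧ e ∈ B) ∧ ∃ C, M.IsCircuit' C ∧ C ⊆ insert e BOPT ∧
        estar ∈ C ∧ estar ≠ e ∧ ∀ g ∈ C, g ≠ e → w g ≤ w estar)) :
    sInf {x : ℝ | ∃ B, (M.contractElem e).IsBase B ∧ x = ∑ᶠ a ∈ B, w a}
      = (∑ᶠ a ∈ BOPT, w a) - w estar := by
  have hEfin := M.ground_finite
  have hsum : ∀ (f : α) (B : Set α), B ⊆ M.E → f ∉ B →
      ∑ᶠ a ∈ insert f B, w a = w f + ∑ᶠ a ∈ B, w a :=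
    fun f B hBE hfB => finsum_mem_insert w hfB (hEfin.subset hBE)
  have hOPTE := hOPT.1.subset_ground
  refine IsLeast.csInf_eq ?_
  rcases hstar with ⟨⟨B, hBmin, heB⟩, hee⟩ | ⟨hne, C, hC, hCsub, hesC, hesne, hmax⟩
  · subst hee
    have hBE := hBmin.1.subset_ground
    have hWB : ∑ᶠ a ∈ B, w a = ∑ᶠ a ∈ BOPT, w a :=
      le_antisymm (hBmin.2 _ hOPT.1) (hOPT.2 _ hBmin.1)
    constructor
    · refine ⟨B \ {estar}, ?_, ?_⟩
      · rw [M.aux_contractElem_base_iff he hel]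
        refine ⟨diff_subset_diff_left hBE, ?_⟩
        rw [insert_diff_singleton, insert_eq_of_mem heB]
        exact hBmin.1
      · have h := hsum estar (B \ {estar}) (diff_subset.trans hBE) (fun h => h.2 rfl)
        rw [insert_diff_singleton, insert_eq_of_mem heB] at h
        linarith
    · rintro x ⟨B', hB', rfl⟩
      rw [M.aux_contractElem_base_iff he hel] at hB'
      obtain ⟨hB'X, hbase⟩ := hB'
      have heB' : estar ∉ B' := fun h => (hB'X h).2 rfl
      have h1 := hsum estar B' (hB'X.trans diff_subset) heB'
      have h2 := hOPT.2 _ hbase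
      linarith
  · have hCE := hC.1.subset_ground
    have heBOPT : e ∉ BOPT := fun h => hne ⟨BOPT, hOPT, h⟩
    have hesBOPT : estar ∈ BOPT := by
      rcases (mem_insert_iff.1 (hCsub hesC)) with h | h
      · exact absurd h hesne
      · exact h
    have heC : e ∈ C := by
      by_contra h
      have hsub : C ⊆ BOPT := by
        intro x hx
        rcases mem_insert_iff.1 (hCsub hx) with h' | h'
        · exact absurd (h' ▸ hx) h
        · exact h'
      exact hC.1.not_indep (hOPT.1.indep.subset hsub)
    have hBI : M.Indep (BOPT \ {estar}) := hOPT.1.indep.subset diff_subset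
    have hecl : e ∉ M.closure (BOPT \ {estar}) := by
      intro hecl
      have h1 : estar ∈ M.closure (C \ {estar}) := aux_circuit_mem_closure hC hesC
      have h2 : C \ {estar} ⊆ insert e (BOPT \ {estar}) := by
        rintro x ⟨hx, hxe⟩
        rcases mem_insert_iff.1 (hCsub hx) with h' | h'
        · exact h' ▸ mem_insert _ _
        · exact mem_insert_of_mem _ ⟨h', hxe⟩
      have h3 : M.closure (insert e (BOPT \ {estar})) = M.closure (BOPT \ {estar}) :=
        closure_insert_eq_of_mem_closure hecl
      have h4 : estar ∈ M.closure (BOPT \ {estar}) :=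
        h3 ▸ (M.closure_subset_closure h2 h1)
      exact hOPT.1.indep.notMem_closure_diff_of_mem hesBOPT h4
    have hins : M.Indep (insert e (BOPT \ {estar})) := by
      rw [hBI.insert_indep_iff_of_notMem (fun h => heBOPT h.1)]
      exact ⟨he, hecl⟩
    have hB1 : M.IsBase (insert e BOPT \ {estar}) := by
      refine hOPT.1.exchange_isBase_of_indep' hesBOPT heBOPT ?_
      rwa [← insert_diff_singleton_comm hesne.symm]
    constructor
    · refine ⟨BOPT \ {estar}, ?_, ?_⟩
      · rw [M.aux_contractElem_base_iff he hel]
        constructor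
        · rintro x ⟨hx, -⟩
          refine ⟨hOPTE hx, ?_⟩
          simp only [mem_singleton_iff]
          rintro rfl
          exact heBOPT hx
        · rwa [insert_diff_singleton_comm hesne.symm]
      · have h := hsum estar (BOPT \ {estar}) (diff_subset.trans hOPTE) (fun h => h.2 rfl)
        rw [insert_diff_singleton, insert_eq_of_mem hesBOPT] at h
        linarith
    · rintro x ⟨B'', hB'', rfl⟩
      rw [M.aux_contractElem_base_iff he hel] at hB''
      obtain ⟨hB''X, hbase⟩ := hB''
      have heB'' : e ∉ B'' := fun h => (hB''X h).2 rfl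
      have hB''E : B'' ⊆ M.E := hB''X.trans diff_subset
      have hB''i : M.Indep B'' := hbase.indep.subset (subset_insert _ _)
      have hexists : ∃ g ∈ C, g ≠ e ∧ g ∉ M.closure B'' := by
        by_contra h
        push_neg at h
        have hsub : C \ {e} ⊆ M.closure B'' := by
          rintro y ⟨hy, hye⟩
          exact h y hy hye
        have h1 : e ∈ M.closure (C \ {e}) := aux_circuit_mem_closure hC heC
        have h2 : e ∈ M.closure B'' := by
          have := M.closure_subset_closure hsub h1
          rwa [M.closure_closure] at this
        have h3 : e ∉ M.closure B'' := by
          rw [hB''i.notMem_closure_iff_of_notMem heB'' he]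
          exact hbase.indep
        exact h3 h2
      obtain ⟨g, hgC, hge, hgcl⟩ := hexists
      have hgB'' : g ∉ B'' := fun h => hgcl (M.subset_closure B'' hB''E h)
      have hgE : g ∈ M.E := hCE hgC
      have hgind : M.Indep (insert g B'') := by
        rw [hB''i.insert_indep_iff_of_notMem hgB'']
        exact ⟨hgE, hgcl⟩
      have hgiE : g ∉ insert e B'' := by
        rintro (h | h)
        · exact hge h
        · exact hgB'' h
      have hset : insert g (insert e B'') \ {e} = insert g B'' := by
        rw [insert_comm, insert_diff_self_of_notMem]
        rintro (h | h)
        · exact hge h.symm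
        · exact heB'' h
      have hgbase : M.IsBase (insert g B'') := by
        have := hbase.exchange_isBase_of_indep' (mem_insert e B'') hgiE (by rw [hset]; exact hgind)
        rwa [hset] at this
      have hod := hOPT.2 _ hgbase
      have hsum2 := hsum g B'' hB''E hgB''
      have hwg := hmax g hgC hge
      linarith
end
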